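/- Let y ∈ {-1,1}, let m, u, B be real numbers with |m| ≤ B. Then e^{-y·m}·( e^{-y·u} - 1 + y·u ) ≥ e^{-B}·u²/(2 + |u|). -/

import Mathlib

open Real

/- Clearing the denominator, `t² / (2 + t) ≤ e^{-t} - 1 + t` for `t ≥ 0` becomes
`2 - t ≤ (2 + t) e^{-t}`; the difference of the two sides vanishes at `0` and has derivative
`1 - (1 + t) e^{-t} ≥ 0` because `1 + t ≤ e^t`. For `t < 0` the quadratic lower bound
`1 - t + t² / 2 ≤ e^{-t}` already suffices. The factor `e^{-y m}` is at least `e^{-B}`, and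
`|y| = 1` makes the bound at `t = y u` one in `u` alone. -/

lemma one_add_mul_exp_neg_le_one (t : ℝ) : (1 + t) * exp (-t) ≤ 1 := by
  have h := mul_le_mul_of_nonneg_right (add_one_le_exp t) (exp_pos (-t)).le
  rwa [← exp_add, add_neg_cancel, exp_zero, add_comm] at h

lemma monotone_two_add_mul_exp_neg_add_sub_two :
    Monotone fun t : ℝ => (2 + t) * exp (-t) + t - 2 := by
  refine monotone_of_deriv_nonneg (by fun_prop) fun t => ?_
  have hderiv : HasDerivAt (fun t : ℝ => (2 + t) * exp (-t) + t - 2)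
      (1 * exp (-t) + (2 + t) * (exp (-t) * -1) + 1) t :=
    ((((hasDerivAt_id t).const_add 2).mul (hasDerivAt_neg t).exp).add (hasDerivAt_id t)).sub_const 2
  rw [hderiv.deriv]
  linarith [one_add_mul_exp_neg_le_one t]

lemma two_sub_le_two_add_mul_exp_neg {t : ℝ} (ht : 0 ≤ t) : 2 - t ≤ (2 + t) * exp (-t) := by
  have h := monotone_two_add_mul_exp_neg_add_sub_two ht
  simp only [add_zero, neg_zero, exp_zero, mul_one, sub_self] at h
  linarith

lemma sq_div_two_add_abs_le_exp_neg_sub_one_add (t : ℝ) :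
    t ^ 2 / (2 + |t|) ≤ exp (-t) - 1 + t := by
  rw [div_le_iff₀ (by positivity)]
  rcases le_or_gt 0 t with ht | ht
  · rw [abs_of_nonneg ht]
    nlinarith [two_sub_le_two_add_mul_exp_neg ht]
  · rw [abs_of_neg ht]
    have hquad : 1 + -t + (-t) ^ 2 / 2 ≤ exp (-t) := quadratic_le_exp_of_nonneg (by linarith)
    nlinarith

theorem interaction_screening_remainder (y m u B : ℝ) (hy : y = -1 ∨ y = 1)
    (hm : |m| ≤ B) :
    Real.exp (-(y * m)) * (Real.exp (-(y * u)) - 1 + y * u) ≥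
      Real.exp (-B) * u ^ 2 / (2 + |u|) := by
  have hy_abs : |y| = 1 := by rcases hy with rfl | rfl <;> simp
  have hfield : exp (-B) ≤ exp (-(y * m)) := by
    have := le_abs_self (y * m)
    rw [abs_mul, hy_abs, one_mul] at this
    exact exp_le_exp.2 (by linarith)
  have hrem := sq_div_two_add_abs_le_exp_neg_sub_one_add (y * u)
  rw [abs_mul, hy_abs, one_mul, mul_pow, ← sq_abs y, hy_abs, one_pow, one_mul] at hrem
  rw [ge_iff_le, mul_div_assoc]
  exact mul_le_mul hfield hrem (by positivity) (exp_pos _).le
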